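/- arXiv:1812.04938 — 3 statements merged into one kernel-verified Lean document; each statement's English description precedes it below -/
import Mathlib

section
/- Let N ≥ 1 be an integer and for x, y ∈ ℤ write y ∼ x iff 0 < |y − x| ≤ N. Let ξ : ℤ → {0,1} have finite support and define u : ℤ → ℝ by u(x) = (2N)⁻¹ Σ_{y ∼ x} ξ(y). For f : ℤ → ℝ define D(f,N)(x) = sup{|f(y) − f(x)| : y ∈ ℤ, |y − x| ≤ N}. Then for every finitely supported f : ℤ → ℝ, |Σ_{x ∈ ℤ} ξ(x) f(x) − Σ_{x ∈ ℤ} u(x) f(x)| ≤ Σ_{x ∈ ℤ} ξ(x) D(f,N)(x). -/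
/-- Lemma 1(ii).
The pairings of a finitely supported test function `f` against the configuration
`ξ` and against its local density `u` differ by at most the pairing of `ξ`
against the local oscillation modulus `D(f,N)`. -/
theorem stmt_1 (N : ℤ) (hN : 1 ≤ N)
    (ξ : ℤ → ℝ) (hξ01 : ∀ x, ξ x = 0 ∨ ξ x = 1)
    (hξfin : (Function.support ξ).Finite)
    (u : ℤ → ℝ)
    (hu : ∀ x, u x = (2 * (N : ℝ))⁻¹ *
      ∑ y ∈ (Finset.Icc (x - N) (x + N)).erase x, ξ y)
    (f : ℤ → ℝ) (hffin : (Function.support f).Finite)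
    (D : ℤ → ℝ)
    (hD : ∀ x, D x = (Finset.Icc (x - N) (x + N)).sup'
      (Finset.nonempty_Icc.mpr (by linarith)) (fun y => |f y - f x|)) :
    |(∑' x : ℤ, ξ x * f x) - ∑' x : ℤ, u x * f x| ≤ ∑' x : ℤ, ξ x * D x := by
  classical
  set A := hξfin.toFinset with hA
  set B := hffin.toFinset with hB
  have hmemA : ∀ x, x ∉ A → ξ x = 0 := by
    intro x hx
    by_contra h
    exact hx (hξfin.mem_toFinset.mpr h)
  have hmemB : ∀ x, x ∉ B → f x = 0 := by
    intro x hx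
    by_contra h
    exact hx (hffin.mem_toFinset.mpr h)
  set nbhd : ℤ → Finset ℤ := fun x => (Finset.Icc (x - N) (x + N)).erase x with hnbhd
  have hNR : (1 : ℝ) ≤ (N : ℝ) := by exact_mod_cast hN
  have h2N : (0 : ℝ) < 2 * (N : ℝ) := by linarith
  have hξnn : ∀ x, 0 ≤ ξ x := by
    intro x; rcases hξ01 x with h | h <;> rw [h] <;> norm_num
  -- tsum reductions
  have t1 : (∑' x : ℤ, ξ x * f x) = ∑ x ∈ A, ξ x * f x := by
    apply tsum_eq_sum
    intro x hx; rw [hmemA x hx, zero_mul]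
  have t3 : (∑' x : ℤ, ξ x * D x) = ∑ x ∈ A, ξ x * D x := by
    apply tsum_eq_sum
    intro x hx; rw [hmemA x hx, zero_mul]
  have t2 : (∑' x : ℤ, u x * f x) = ∑ x ∈ B, u x * f x := by
    apply tsum_eq_sum
    intro x hx; rw [hmemB x hx, mul_zero]
  -- symmetry of the neighbourhood relation
  have hsymm : ∀ x y : ℤ, y ∈ nbhd x ↔ x ∈ nbhd y := by
    intro x y
    simp only [hnbhd, Finset.mem_erase, Finset.mem_Icc]
    omega
  -- cardinality of the neighbourhood
  have hcard : ∀ y : ℤ, ((nbhd y).card : ℝ) = 2 * (N : ℝ) := by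
    intro y
    have hmem : y ∈ Finset.Icc (y - N) (y + N) := by
      simp only [Finset.mem_Icc]; omega
    have : (nbhd y).card = (Finset.Icc (y - N) (y + N)).card - 1 :=
      Finset.card_erase_of_mem hmem
    rw [this, Int.card_Icc]
    have h1 : (y + N + 1 - (y - N)) = 2 * N + 1 := by ring
    rw [h1]
    have h2 : (2 * N + 1).toNat = (2 * N).toNat + 1 := by omega
    rw [h2]
    simp only [Nat.add_sub_cancel]
    have h3 : ((2 * N).toNat : ℤ) = 2 * N := Int.toNat_of_nonneg (by omega)
    exact_mod_cast h3
  -- the double-sum swap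
  have hswap : ∑ x ∈ B, ∑ y ∈ nbhd x, ξ y * f x
      = ∑ y ∈ A, ξ y * ∑ x ∈ nbhd y, f x := by
    have step1 : ∀ x : ℤ, ∑ y ∈ nbhd x, ξ y * f x
        = ∑ y ∈ A, if y ∈ nbhd x then ξ y * f x else 0 := by
      intro x
      rw [Finset.sum_ite_mem]
      refine (Finset.sum_subset Finset.inter_subset_right ?_).symm
      intro y hy hy'
      have : y ∉ A := by
        intro hyA
        exact hy' (Finset.mem_inter.mpr ⟨hyA, hy⟩)
      rw [hmemA y this, zero_mul]
    calc ∑ x ∈ B, ∑ y ∈ nbhd x, ξ y * f x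
        = ∑ x ∈ B, ∑ y ∈ A, if y ∈ nbhd x then ξ y * f x else 0 := by
          exact Finset.sum_congr rfl fun x _ => step1 x
      _ = ∑ y ∈ A, ∑ x ∈ B, if y ∈ nbhd x then ξ y * f x else 0 :=
          Finset.sum_comm
      _ = ∑ y ∈ A, ξ y * ∑ x ∈ nbhd y, f x := by
          refine Finset.sum_congr rfl fun y _ => ?_
          have : ∀ x ∈ B, (if y ∈ nbhd x then ξ y * f x else 0)
              = if x ∈ nbhd y then ξ y * f x else 0 := by
            intro x _
            simp only [hsymm x y]
          rw [Finset.sum_congr rfl this, Finset.sum_ite_mem, Finset.mul_sum]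
          refine Finset.sum_subset Finset.inter_subset_right ?_
          intro x hx hx'
          have : x ∉ B := by
            intro hxB
            exact hx' (Finset.mem_inter.mpr ⟨hxB, hx⟩)
          rw [hmemB x this, mul_zero]
  -- rewrite the u-pairing
  have hu_sum : ∑ x ∈ B, u x * f x
      = (2 * (N : ℝ))⁻¹ * ∑ y ∈ A, ξ y * ∑ x ∈ nbhd y, f x := by
    rw [← hswap, Finset.mul_sum]
    refine Finset.sum_congr rfl fun x _ => ?_
    rw [hu x, Finset.mul_sum, Finset.sum_mul, Finset.mul_sum]
    refine Finset.sum_congr rfl fun y _ => ?_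
    ring
  -- rewrite the ξ-pairing with the 1/(2N) factor
  have hξ_sum : ∑ x ∈ A, ξ x * f x
      = (2 * (N : ℝ))⁻¹ * ∑ y ∈ A, ξ y * ((nbhd y).card * f y) := by
    rw [Finset.mul_sum]
    refine Finset.sum_congr rfl fun y _ => ?_
    rw [hcard y]
    field_simp
  -- the key difference formula
  have hdiff : (∑ x ∈ A, ξ x * f x) - ∑ x ∈ B, u x * f x
      = (2 * (N : ℝ))⁻¹ * ∑ y ∈ A, ξ y * ∑ x ∈ nbhd y, (f y - f x) := by
    rw [hξ_sum, hu_sum, ← mul_sub, ← Finset.sum_sub_distrib]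
    congr 1
    refine Finset.sum_congr rfl fun y _ => ?_
    rw [← mul_sub]
    congr 1
    rw [Finset.sum_sub_distrib, Finset.sum_const, nsmul_eq_mul]
  -- bound on each |f y - f x|
  have hDbound : ∀ y : ℤ, ∀ x ∈ nbhd y, |f y - f x| ≤ D y := by
    intro y x hx
    rw [hD y, abs_sub_comm]
    exact Finset.le_sup' (fun z => |f z - f y|) (Finset.mem_of_mem_erase hx)
  have hDnn : ∀ y : ℤ, 0 ≤ D y := by
    intro y
    have hmem : y ∈ Finset.Icc (y - N) (y + N) := by
      simp only [Finset.mem_Icc]; omega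
    calc (0 : ℝ) ≤ |f y - f y| := abs_nonneg _
      _ ≤ D y := by
          rw [hD y]
          exact Finset.le_sup' (fun z => |f z - f y|) hmem
  -- final estimate
  rw [t1, t2, t3, hdiff, abs_mul, abs_of_pos (inv_pos.mpr h2N)]
  have hbound : |∑ y ∈ A, ξ y * ∑ x ∈ nbhd y, (f y - f x)|
      ≤ ∑ y ∈ A, ξ y * (2 * (N : ℝ) * D y) := by
    calc |∑ y ∈ A, ξ y * ∑ x ∈ nbhd y, (f y - f x)|
        ≤ ∑ y ∈ A, |ξ y * ∑ x ∈ nbhd y, (f y - f x)| :=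
          Finset.abs_sum_le_sum_abs _ _
      _ ≤ ∑ y ∈ A, ξ y * (2 * (N : ℝ) * D y) := by
          refine Finset.sum_le_sum fun y _ => ?_
          rw [abs_mul, abs_of_nonneg (hξnn y)]
          refine mul_le_mul_of_nonneg_left ?_ (hξnn y)
          calc |∑ x ∈ nbhd y, (f y - f x)|
              ≤ ∑ x ∈ nbhd y, |f y - f x| := Finset.abs_sum_le_sum_abs _ _
            _ ≤ (nbhd y).card • D y :=
                Finset.sum_le_card_nsmul _ _ _ (hDbound y)
            _ = 2 * (N : ℝ) * D y := by rw [nsmul_eq_mul, hcard y]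
  calc (2 * (N : ℝ))⁻¹ * |∑ y ∈ A, ξ y * ∑ x ∈ nbhd y, (f y - f x)|
      ≤ (2 * (N : ℝ))⁻¹ * ∑ y ∈ A, ξ y * (2 * (N : ℝ) * D y) := by
        exact mul_le_mul_of_nonneg_left hbound (le_of_lt (inv_pos.mpr h2N))
    _ = ∑ y ∈ A, ξ y * D y := by
        rw [Finset.mul_sum]
        refine Finset.sum_congr rfl fun y _ => ?_
        field_simp
end

section
/- Let m ≥ 1 be an integer and λ > 0 a real number. There exists a constant C > 0, depending only on m and λ, with the following property: for all integers N, ρ with 2 ≤ N ≤ ρ and every finitely supported ξ : ℤ → {0,1}, writing y ∼ x iff 0 < |y − x| ≤ N and u(x) = (2N)⁻¹ Σ_{y ∼ x} ξ(y), one has Σ_{x ∈ ℤ} ξ(x) u(x)^m e^{−λ|x|/ρ} ≤ C Σ_{x ∈ ℤ} u(x)^{m+1} e^{−λ|x|/ρ}. -/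
/-- Lemma 1(iii).
There is a constant `C = C(m, λ) > 0` such that for all `2 ≤ N ≤ ρ` and every
finitely supported `{0,1}`-configuration `ξ` with local density `u`, the pairing
of `ξ` against `u^m e^{-λ|x|/ρ}` is bounded by `C` times the pairing of the
constant configuration against `u^(m+1) e^{-λ|x|/ρ}`. -/
theorem stmt_2 (m : ℕ) (hm : 1 ≤ m) (lam : ℝ) (hlam : 0 < lam) :
    ∃ C : ℝ, 0 < C ∧ ∀ (N ρ : ℤ), 2 ≤ N → N ≤ ρ →
      ∀ (ξ : ℤ → ℝ), (∀ x, ξ x = 0 ∨ ξ x = 1) → (Function.support ξ).Finite →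
      ∀ u : ℤ → ℝ,
        (∀ x, u x = (2 * (N : ℝ))⁻¹ *
          ∑ y ∈ (Finset.Icc (x - N) (x + N)).erase x, ξ y) →
        ∑' x : ℤ, ξ x * u x ^ m * Real.exp (-(lam * |(x : ℝ)| / (ρ : ℝ))) ≤
          C * ∑' x : ℤ, u x ^ (m + 1) * Real.exp (-(lam * |(x : ℝ)| / (ρ : ℝ))) := by
  classical
  refine ⟨2 ^ (m + 1) * Real.exp lam, by positivity, ?_⟩
  intro N ρ hN hNρ ξ hξ01 hfin u hu
  set w : ℤ → ℝ := fun x => Real.exp (-(lam * |(x : ℝ)| / (ρ : ℝ))) with hw_def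
  have hNR : (0:ℝ) < (N:ℝ) := by exact_mod_cast (by omega : (0:ℤ) < N)
  have hρR : (0:ℝ) < (ρ:ℝ) := by exact_mod_cast (by omega : (0:ℤ) < ρ)
  have hξ0 : ∀ x, 0 ≤ ξ x := by
    intro x; rcases hξ01 x with h | h <;> rw [h] <;> norm_num
  have hξ1 : ∀ x, ξ x ≤ 1 := by
    intro x; rcases hξ01 x with h | h <;> rw [h] <;> norm_num
  have hu0 : ∀ x, 0 ≤ u x := by
    intro x; rw [hu x]
    exact mul_nonneg (by positivity) (Finset.sum_nonneg fun y _ => hξ0 y)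
  have hw0 : ∀ x, 0 ≤ w x := fun x => (Real.exp_pos _).le
  -- the identity `2 N u x = ∑ over punctured window`
  have husum : ∀ x, 2 * (N:ℝ) * u x
      = ∑ y ∈ (Finset.Icc (x - N) (x + N)).erase x, ξ y := by
    intro x; rw [hu x]
    field_simp
  -- left and right half sums
  set L : ℤ → ℝ := fun x => ∑ y ∈ Finset.Icc (x - N) (x - 1), ξ y with hL_def
  set R : ℤ → ℝ := fun x => ∑ y ∈ Finset.Icc (x + 1) (x + N), ξ y with hR_def
  have hsplit : ∀ x, 2 * (N:ℝ) * u x = L x + R x := by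
    intro x
    rw [husum x]
    have hset : (Finset.Icc (x - N) (x + N)).erase x
        = Finset.Icc (x - N) (x - 1) ∪ Finset.Icc (x + 1) (x + N) := by
      ext z
      simp only [Finset.mem_erase, Finset.mem_Icc, Finset.mem_union]
      omega
    rw [hset, Finset.sum_union]
    rw [Finset.disjoint_left]
    intro z hz hz'
    simp only [Finset.mem_Icc] at hz hz'
    omega
  -- the chosen side
  set σ : ℤ → Finset ℤ := fun x =>
    if L x ≤ R x then Finset.Icc (x + 1) (x + N) else Finset.Icc (x - N) (x - 1)
    with hσ_def
  have hσcard : ∀ x, ((σ x).card : ℝ) = (N:ℝ) := by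
    intro x
    by_cases hc : L x ≤ R x
    · simp only [hσ_def, hc, if_true]
      rw [Int.card_Icc, show x + N + 1 - (x + 1) = N by ring]
      exact_mod_cast Int.toNat_of_nonneg (by omega : (0:ℤ) ≤ N)
    · simp only [hσ_def, hc, if_false]
      rw [Int.card_Icc, show x - 1 + 1 - (x - N) = N by ring]
      exact_mod_cast Int.toNat_of_nonneg (by omega : (0:ℤ) ≤ N)
  have hσmem : ∀ x y, y ∈ σ x → x ∈ (Finset.Icc (y - N) (y + N)).erase y ∧
      y ∈ Finset.Icc (x - N) (x + N) ∧ |y - x| ≤ N := by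
    intro x y hy
    by_cases hc : L x ≤ R x <;>
      simp only [hσ_def, hc, if_true, if_false, Finset.mem_Icc] at hy <;>
      refine ⟨by simp only [Finset.mem_erase, Finset.mem_Icc]; omega,
        by simp only [Finset.mem_Icc]; omega, by rw [abs_le]; omega⟩
  -- key density comparison on the heavy side
  have hkey : ∀ x, ξ x = 1 → ∀ y ∈ σ x, (N:ℝ) * u x ≤ 2 * (N:ℝ) * u y := by
    intro x hx y hy
    have hsum_y := husum y
    by_cases hc : L x ≤ R x
    · simp only [hσ_def, hc, if_true] at hy
      have hyIcc : x + 1 ≤ y ∧ y ≤ x + N := by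
        simpa only [Finset.mem_Icc] using hy
      -- window of y contains [x, x+N] \ {y}
      have hsub : (Finset.Icc x (x + N)).erase y ⊆ (Finset.Icc (y - N) (y + N)).erase y := by
        intro z hz
        simp only [Finset.mem_erase, Finset.mem_Icc] at hz ⊢
        omega
      have h2 : ∑ z ∈ (Finset.Icc x (x + N)).erase y, ξ z
          ≤ ∑ z ∈ (Finset.Icc (y - N) (y + N)).erase y, ξ z :=
        Finset.sum_le_sum_of_subset_of_nonneg hsub (fun z _ _ => hξ0 z)
      have hymem : y ∈ Finset.Icc x (x + N) := by
        simp only [Finset.mem_Icc]; omega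
      have h3 : ∑ z ∈ (Finset.Icc x (x + N)).erase y, ξ z
          = (∑ z ∈ Finset.Icc x (x + N), ξ z) - ξ y :=
        Finset.sum_erase_eq_sub hymem
      have h4 : ∑ z ∈ Finset.Icc x (x + N), ξ z = ξ x + R x := by
        have hins : Finset.Icc x (x + N) = insert x (Finset.Icc (x + 1) (x + N)) := by
          ext z; simp only [Finset.mem_Icc, Finset.mem_insert]; omega
        rw [hins, Finset.sum_insert (by simp only [Finset.mem_Icc]; omega)]
      have h5 := hsplit x
      have h6 := hξ1 y
      rw [← hsum_y] at h2
      rw [h3, h4, hx] at h2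
      linarith
    · push_neg at hc
      simp only [hσ_def, if_neg (not_le.mpr hc)] at hy
      have hyIcc : x - N ≤ y ∧ y ≤ x - 1 := by
        simpa only [Finset.mem_Icc] using hy
      have hsub : (Finset.Icc (x - N) x).erase y ⊆ (Finset.Icc (y - N) (y + N)).erase y := by
        intro z hz
        simp only [Finset.mem_erase, Finset.mem_Icc] at hz ⊢
        omega
      have h2 : ∑ z ∈ (Finset.Icc (x - N) x).erase y, ξ z
          ≤ ∑ z ∈ (Finset.Icc (y - N) (y + N)).erase y, ξ z :=
        Finset.sum_le_sum_of_subset_of_nonneg hsub (fun z _ _ => hξ0 z)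
      have hymem : y ∈ Finset.Icc (x - N) x := by
        simp only [Finset.mem_Icc]; omega
      have h3 : ∑ z ∈ (Finset.Icc (x - N) x).erase y, ξ z
          = (∑ z ∈ Finset.Icc (x - N) x, ξ z) - ξ y :=
        Finset.sum_erase_eq_sub hymem
      have h4 : ∑ z ∈ Finset.Icc (x - N) x, ξ z = ξ x + L x := by
        have hins : Finset.Icc (x - N) x = insert x (Finset.Icc (x - N) (x - 1)) := by
          ext z; simp only [Finset.mem_Icc, Finset.mem_insert]; omega
        rw [hins, Finset.sum_insert (by simp only [Finset.mem_Icc]; omega)]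
      have h5 := hsplit x
      have h6 := hξ1 y
      rw [← hsum_y] at h2
      rw [h3, h4, hx] at h2
      linarith
  -- weight comparison
  have hwc : ∀ x y : ℤ, |y - x| ≤ N → w x ≤ Real.exp lam * w y := by
    intro x y hxy
    have habs : |(y:ℝ)| ≤ |(x:ℝ)| + (ρ:ℝ) := by
      have h1 : |(y:ℝ) - (x:ℝ)| ≤ (N:ℝ) := by
        have : ((|y - x| : ℤ) : ℝ) ≤ ((N:ℤ) : ℝ) := by exact_mod_cast hxy
        rwa [Int.cast_abs, Int.cast_sub] at this
      have h2 : (N:ℝ) ≤ (ρ:ℝ) := by exact_mod_cast hNρ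
      have := abs_sub_abs_le_abs_sub (y:ℝ) (x:ℝ)
      linarith
    simp only [hw_def, ← Real.exp_add]
    apply Real.exp_le_exp.mpr
    have h1 : lam * |(y:ℝ)| ≤ lam * |(x:ℝ)| + lam * ρ := by
      nlinarith [mul_le_mul_of_nonneg_left habs hlam.le]
    have h2 : lam * |(y:ℝ)| / ρ ≤ (lam * |(x:ℝ)| + lam * ρ) / ρ := by gcongr
    have h3 : (lam * |(x:ℝ)| + lam * (ρ:ℝ)) / ρ = lam * |(x:ℝ)| / ρ + lam := by
      field_simp
    rw [h3] at h2
    linarith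
  -- per-site estimate
  set h : ℤ → ℝ := fun y => u y ^ m * w y with hh_def
  have hh0 : ∀ y, 0 ≤ h y := fun y => mul_nonneg (pow_nonneg (hu0 y) m) (hw0 y)
  have hstep : ∀ x, ξ x = 1 →
      ξ x * u x ^ m * w x ≤ (2 ^ m * Real.exp lam / (N:ℝ)) * ∑ y ∈ σ x, h y := by
    intro x hx
    have hpt : ∀ y ∈ σ x, u x ^ m * w x ≤ 2 ^ m * Real.exp lam * h y := by
      intro y hy
      have h1 : (N:ℝ) * u x ≤ 2 * (N:ℝ) * u y := hkey x hx y hy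
      have h2 : u x ≤ 2 * u y := by
        have := (mul_le_mul_iff_right₀ hNR).mp (by linarith : (N:ℝ) * u x ≤ (N:ℝ) * (2 * u y))
        linarith
      have h3 : u x ^ m ≤ (2 * u y) ^ m := pow_le_pow_left₀ (hu0 x) h2 m
      have h4 : w x ≤ Real.exp lam * w y := hwc x y (hσmem x y hy).2.2
      have h5 : (2 * u y) ^ m = 2 ^ m * u y ^ m := by rw [mul_pow]
      calc u x ^ m * w x ≤ (2 * u y) ^ m * (Real.exp lam * w y) :=
            mul_le_mul h3 h4 (hw0 x) (pow_nonneg (by linarith [hu0 y]) m)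
        _ = 2 ^ m * Real.exp lam * h y := by rw [h5, hh_def]; ring
    have hsum : (N:ℝ) * (u x ^ m * w x) ≤ 2 ^ m * Real.exp lam * ∑ y ∈ σ x, h y := by
      have := Finset.sum_le_sum hpt
      rw [Finset.sum_const, nsmul_eq_mul] at this
      calc (N:ℝ) * (u x ^ m * w x) = ((σ x).card : ℝ) * (u x ^ m * w x) := by
            rw [hσcard x]
        _ ≤ ∑ y ∈ σ x, 2 ^ m * Real.exp lam * h y := this
        _ = 2 ^ m * Real.exp lam * ∑ y ∈ σ x, h y := by rw [Finset.mul_sum]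
    rw [hx, one_mul, div_mul_eq_mul_div, le_div_iff₀ hNR]
    linarith
  -- finite supports
  set S : Finset ℤ := hfin.toFinset with hS_def
  set B : Finset ℤ := S.biUnion (fun z => Finset.Icc (z - N) (z + N)) with hB_def
  have hSmem : ∀ x ∈ S, ξ x = 1 := by
    intro x hx
    have : ξ x ≠ 0 := by
      simpa [hS_def, Function.mem_support] using (Set.Finite.mem_toFinset hfin).mp hx
    rcases hξ01 x with h' | h'
    · exact absurd h' this
    · exact h'
  have hfzero : ∀ x ∉ S, ξ x * u x ^ m * w x = 0 := by
    intro x hx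
    have : ξ x = 0 := by
      by_contra h'
      exact hx ((Set.Finite.mem_toFinset hfin).mpr h')
    rw [this, zero_mul, zero_mul]
  have hgzero : ∀ y ∉ B, u y ^ (m + 1) * w y = 0 := by
    intro y hy
    have huy : u y = 0 := by
      rw [hu y]
      have : ∀ z ∈ (Finset.Icc (y - N) (y + N)).erase y, ξ z = 0 := by
        intro z hz
        by_contra h'
        apply hy
        rw [hB_def, Finset.mem_biUnion]
        refine ⟨z, (Set.Finite.mem_toFinset hfin).mpr h', ?_⟩
        simp only [Finset.mem_erase, Finset.mem_Icc] at hz ⊢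
        omega
      rw [Finset.sum_eq_zero this, mul_zero]
    rw [huy, zero_pow (by omega), zero_mul]
  have hσsub : ∀ x ∈ S, σ x ⊆ B := by
    intro x hx y hy
    rw [hB_def, Finset.mem_biUnion]
    exact ⟨x, hx, (hσmem x y hy).2.1⟩
  -- rewrite the tsums as finite sums
  rw [tsum_eq_sum hfzero, tsum_eq_sum hgzero]
  -- double counting
  have hmain : ∑ x ∈ S, ξ x * u x ^ m * w x
      ≤ (2 ^ m * Real.exp lam / (N:ℝ)) * ∑ y ∈ B, ∑ x ∈ S,
          (if y ∈ σ x then h y else 0) := by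
    have h1 : ∑ x ∈ S, ξ x * u x ^ m * w x
        ≤ ∑ x ∈ S, (2 ^ m * Real.exp lam / (N:ℝ)) * ∑ y ∈ σ x, h y :=
      Finset.sum_le_sum fun x hx => hstep x (hSmem x hx)
    have h2 : ∀ x ∈ S, ∑ y ∈ σ x, h y = ∑ y ∈ B, (if y ∈ σ x then h y else 0) := by
      intro x hx
      rw [Finset.sum_ite_mem, Finset.inter_eq_right.mpr (hσsub x hx)]
    calc ∑ x ∈ S, ξ x * u x ^ m * w x
        ≤ ∑ x ∈ S, (2 ^ m * Real.exp lam / (N:ℝ)) * ∑ y ∈ σ x, h y := h1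
      _ = (2 ^ m * Real.exp lam / (N:ℝ)) * ∑ x ∈ S, ∑ y ∈ σ x, h y := by
          rw [Finset.mul_sum]
      _ = (2 ^ m * Real.exp lam / (N:ℝ)) * ∑ x ∈ S, ∑ y ∈ B,
            (if y ∈ σ x then h y else 0) := by
          rw [Finset.sum_congr rfl h2]
      _ = (2 ^ m * Real.exp lam / (N:ℝ)) * ∑ y ∈ B, ∑ x ∈ S,
            (if y ∈ σ x then h y else 0) := by rw [Finset.sum_comm]
  -- bound the multiplicity
  have hcount : ∀ y ∈ B, ∑ x ∈ S, (if y ∈ σ x then h y else 0)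
      ≤ 2 * (N:ℝ) * (u y ^ (m + 1) * w y) := by
    intro y _
    have h1 : ∑ x ∈ S, (if y ∈ σ x then h y else 0)
        = ((S.filter (fun x => y ∈ σ x)).card : ℝ) * h y := by
      rw [Finset.sum_ite, Finset.sum_const_zero, add_zero, Finset.sum_const,
        nsmul_eq_mul]
    have h2 : ((S.filter (fun x => y ∈ σ x)).card : ℝ) ≤ 2 * (N:ℝ) * u y := by
      have hca : ((S.filter (fun x => y ∈ σ x)).card : ℝ)
          = ∑ x ∈ S.filter (fun x => y ∈ σ x), ξ x := by
        rw [Finset.card_eq_sum_ones]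
        push_cast
        refine Finset.sum_congr rfl fun x hx => ?_
        rw [hSmem x (Finset.mem_filter.mp hx).1]
      have hsub : S.filter (fun x => y ∈ σ x) ⊆ (Finset.Icc (y - N) (y + N)).erase y := by
        intro x hx
        exact (hσmem x y (Finset.mem_filter.mp hx).2).1
      have := Finset.sum_le_sum_of_subset_of_nonneg hsub (fun z _ _ => hξ0 z)
      rw [hca, husum y]
      exact this
    rw [h1]
    have h3 : ((S.filter (fun x => y ∈ σ x)).card : ℝ) * h y ≤ (2 * (N:ℝ) * u y) * h y :=
      mul_le_mul_of_nonneg_right h2 (hh0 y)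
    calc ((S.filter (fun x => y ∈ σ x)).card : ℝ) * h y ≤ (2 * (N:ℝ) * u y) * h y := h3
      _ = 2 * (N:ℝ) * (u y ^ (m + 1) * w y) := by
          rw [hh_def]; rw [pow_succ]; ring
  have hfinal : ∑ x ∈ S, ξ x * u x ^ m * w x
      ≤ (2 ^ m * Real.exp lam / (N:ℝ)) * (2 * (N:ℝ) * ∑ y ∈ B, u y ^ (m + 1) * w y) := by
    have hsum2 : ∑ y ∈ B, ∑ x ∈ S, (if y ∈ σ x then h y else 0)
        ≤ ∑ y ∈ B, 2 * (N:ℝ) * (u y ^ (m + 1) * w y) := Finset.sum_le_sum hcount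
    have hc0 : (0:ℝ) ≤ 2 ^ m * Real.exp lam / (N:ℝ) := by positivity
    calc ∑ x ∈ S, ξ x * u x ^ m * w x
        ≤ (2 ^ m * Real.exp lam / (N:ℝ)) * ∑ y ∈ B, ∑ x ∈ S,
            (if y ∈ σ x then h y else 0) := hmain
      _ ≤ (2 ^ m * Real.exp lam / (N:ℝ)) * ∑ y ∈ B, 2 * (N:ℝ) * (u y ^ (m + 1) * w y) :=
          mul_le_mul_of_nonneg_left hsum2 hc0
      _ = (2 ^ m * Real.exp lam / (N:ℝ)) * (2 * (N:ℝ) * ∑ y ∈ B, u y ^ (m + 1) * w y) := by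
          rw [← Finset.mul_sum]
  calc ∑ x ∈ S, ξ x * u x ^ m * w x
      ≤ (2 ^ m * Real.exp lam / (N:ℝ)) * (2 * (N:ℝ) * ∑ y ∈ B, u y ^ (m + 1) * w y) :=
        hfinal
    _ = 2 ^ (m + 1) * Real.exp lam * ∑ y ∈ B, u y ^ (m + 1) * w y := by
        have hN0 : (N:ℝ) ≠ 0 := ne_of_gt hNR
        field_simp
        ring
end

section
/- Let N ≥ 2 be an integer and for x, y ∈ ℤ write y ∼ x iff 0 < |y − x| ≤ N. Let ξ : ℤ → {0,1} have finite support, let u(x) = (2N)⁻¹ Σ_{y ∼ x} ξ(y), and for f : ℤ → ℝ let D(f,N)(x) = sup{|f(y) − f(x)| : y ∈ ℤ, |y − x| ≤ N}. Then for every finitely supported f : ℤ → [0,∞), Σ_{x ∈ ℤ} ξ(x) u(x) f(x) ≤ 4 Σ_{x ∈ ℤ} u(x)² f(x) + 4 Σ_{x ∈ ℤ} u(x)² D(f,N)(x). -/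
namespace Stmt3Aux

/-- neighbours of `x`: sites at distance `≤ N` from `x`, other than `x`. -/
noncomputable def nbr (N x : ℤ) : Finset ℤ := (Finset.Icc (x - N) (x + N)).erase x

/-- common neighbours of `x` and `y` (excluding `x` and `y`). -/
noncomputable def com (N x y : ℤ) : Finset ℤ :=
  ((Finset.Icc (max x y - N) (min x y + N)).erase x).erase y

lemma mem_nbr {N x y : ℤ} : y ∈ nbr N x ↔ y ≠ x ∧ x - N ≤ y ∧ y ≤ x + N := by
  simp [nbr, Finset.mem_erase, Finset.mem_Icc, and_assoc]

lemma nbr_symm {N x y : ℤ} (h : y ∈ nbr N x) : x ∈ nbr N y := by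
  rw [mem_nbr] at h ⊢; omega

lemma nbr_subset_Icc {N x : ℤ} : nbr N x ⊆ Finset.Icc (x - N) (x + N) :=
  Finset.erase_subset _ _

lemma com_mem {N x y z : ℤ} (h : z ∈ com N x y) :
    z ∈ nbr N x ∧ z ∈ nbr N y := by
  have h1 := le_max_left x y
  have h2 := le_max_right x y
  have h3 := min_le_left x y
  have h4 := min_le_right x y
  simp only [com, Finset.mem_erase, Finset.mem_Icc] at h
  rw [mem_nbr, mem_nbr]
  omega

lemma card_com {N x y : ℤ} (hN : 2 ≤ N) (hy : y ∈ nbr N x) :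
    (N : ℝ) / 2 ≤ ((com N x y).card : ℝ) := by
  have hxy : max x y - min x y ≤ N := by
    rcases le_total x y with h | h
    · rw [max_eq_right h, min_eq_left h]; rw [mem_nbr] at hy; omega
    · rw [max_eq_left h, min_eq_right h]; rw [mem_nbr] at hy; omega
  have h1 : (Finset.Icc (max x y - N) (min x y + N)).card
      = (min x y + N + 1 - (max x y - N)).toNat := Int.card_Icc _ _
  have h2 : N.toNat + 1 ≤ (Finset.Icc (max x y - N) (min x y + N)).card := by
    rw [h1]; omega
  have e1 := Finset.pred_card_le_card_erase
    (s := Finset.Icc (max x y - N) (min x y + N)) (a := x)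
  have e2 := Finset.pred_card_le_card_erase
    (s := (Finset.Icc (max x y - N) (min x y + N)).erase x) (a := y)
  have h3 : N.toNat - 1 ≤ (com N x y).card := by
    unfold com; omega
  have h5 : (2 : ℕ) ≤ N.toNat := by omega
  have h6 : ((N.toNat - 1 : ℕ) : ℝ) ≤ ((com N x y).card : ℝ) := by exact_mod_cast h3
  rw [Nat.cast_sub (by omega)] at h6
  have h7 : ((N.toNat : ℕ) : ℝ) = (N : ℝ) := by
    exact_mod_cast congrArg Int.cast (Int.toNat_of_nonneg (by omega))
  have h8 : (2 : ℝ) ≤ (N : ℝ) := by exact_mod_cast hN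
  rw [h7] at h6
  push_cast at h6 ⊢
  linarith

end Stmt3Aux

open Stmt3Aux Finset

/-- key intermediate inequality of Lemma 1(iii).
For `N ≥ 2`, the pairing of a nonnegative finitely supported `f` against `ξ·u`
is bounded by `4(u², f) + 4(u², D(f,N))`. -/
theorem stmt_3 (N : ℤ) (hN : 2 ≤ N)
    (ξ : ℤ → ℝ) (hξ01 : ∀ x, ξ x = 0 ∨ ξ x = 1)
    (hξfin : (Function.support ξ).Finite)
    (u : ℤ → ℝ)
    (hu : ∀ x, u x = (2 * (N : ℝ))⁻¹ *
      ∑ y ∈ (Finset.Icc (x - N) (x + N)).erase x, ξ y)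
    (f : ℤ → ℝ) (hf0 : ∀ x, 0 ≤ f x) (hffin : (Function.support f).Finite)
    (D : ℤ → ℝ)
    (hD : ∀ x, D x = (Finset.Icc (x - N) (x + N)).sup'
      (Finset.nonempty_Icc.mpr (by linarith)) (fun y => |f y - f x|)) :
    ∑' x : ℤ, ξ x * u x * f x ≤
      4 * (∑' x : ℤ, u x ^ 2 * f x) + 4 * ∑' x : ℤ, u x ^ 2 * D x := by
  have hNR : (0 : ℝ) < (N : ℝ) := by exact_mod_cast lt_of_lt_of_le (by norm_num) hN
  have hu' : ∀ x, u x = (2 * (N : ℝ))⁻¹ * ∑ y ∈ nbr N x, ξ y := hu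
  have hξ0 : ∀ x, 0 ≤ ξ x := fun x => by rcases hξ01 x with h | h <;> simp [h]
  have hD0 : ∀ x, 0 ≤ D x := by
    intro x
    rw [hD x]
    have hx : x ∈ Finset.Icc (x - N) (x + N) := by rw [Finset.mem_Icc]; omega
    calc (0 : ℝ) = |f x - f x| := by simp
    _ ≤ _ := Finset.le_sup' (fun y => |f y - f x|) hx
  have hfD : ∀ x z, z ∈ nbr N x → f x ≤ f z + D z := by
    intro x z hz
    rw [mem_nbr] at hz
    have hx : x ∈ Finset.Icc (z - N) (z + N) := by rw [Finset.mem_Icc]; omega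
    have h2 : |f x - f z| ≤ D z := by
      rw [hD z]; exact Finset.le_sup' (fun y => |f y - f z|) hx
    have h3 := (abs_le.mp h2).2
    linarith
  set A : Finset ℤ := hξfin.toFinset with hA
  set B : Finset ℤ := A.biUnion (fun a => Finset.Icc (a - N) (a + N)) with hB
  set E : Finset ℤ := B.biUnion (fun b => Finset.Icc (b - N) (b + N)) with hE
  have hBmem : ∀ a z : ℤ, ξ a ≠ 0 → z ∈ Finset.Icc (a - N) (a + N) → z ∈ B := by
    intro a z ha hz
    exact Finset.mem_biUnion.mpr ⟨a, hξfin.mem_toFinset.mpr ha, hz⟩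
  have huB : ∀ x, x ∉ B → u x = 0 := by
    intro x hx
    rw [hu' x]
    have : ∑ y ∈ nbr N x, ξ y = 0 := by
      apply Finset.sum_eq_zero
      intro y hy
      by_contra hy0
      apply hx
      apply hBmem y x hy0
      rw [mem_nbr] at hy
      rw [Finset.mem_Icc]
      omega
    rw [this, mul_zero]
  have hBE : B ⊆ E := fun b hb =>
    Finset.mem_biUnion.mpr ⟨b, hb, by rw [Finset.mem_Icc]; omega⟩
  have hnbrE : ∀ x ∈ B, nbr N x ⊆ E := fun x hx y hy =>
    Finset.mem_biUnion.mpr ⟨x, hx, nbr_subset_Icc hy⟩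
  have hcomE : ∀ x ∈ B, ∀ y, com N x y ⊆ E := by
    intro x hx y z hz
    exact hnbrE x hx (com_mem hz).1
  have hsum2Nu : ∀ z, ∑ w ∈ nbr N z, ξ w = 2 * (N : ℝ) * u z := by
    intro z
    rw [hu' z]
    field_simp
  -- reduce tsums to finite sums over B
  have t1 : ∑' x : ℤ, ξ x * u x * f x = ∑ x ∈ B, ξ x * u x * f x :=
    tsum_eq_sum (fun x hx => by rw [huB x hx]; ring)
  have t2 : ∑' x : ℤ, u x ^ 2 * f x = ∑ x ∈ B, u x ^ 2 * f x :=
    tsum_eq_sum (fun x hx => by rw [huB x hx]; ring)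
  have t3 : ∑' x : ℤ, u x ^ 2 * D x = ∑ x ∈ B, u x ^ 2 * D x :=
    tsum_eq_sum (fun x hx => by rw [huB x hx]; ring)
  rw [t1, t2, t3]
  -- the key single-pair estimate
  have key1 : ∀ x, ∀ y ∈ nbr N x,
      ξ x * ξ y * f x ≤ 2 / (N : ℝ) * ∑ z ∈ com N x y, ξ x * ξ y * (f z + D z) := by
    intro x y hy
    have hξξ : 0 ≤ ξ x * ξ y := mul_nonneg (hξ0 x) (hξ0 y)
    have h0 : 0 ≤ ξ x * ξ y * f x := mul_nonneg hξξ (hf0 x)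
    have hsub : ∀ z ∈ com N x y, ξ x * ξ y * f x ≤ ξ x * ξ y * (f z + D z) := by
      intro z hz
      exact mul_le_mul_of_nonneg_left (hfD x z (com_mem hz).1) hξξ
    have hge := Finset.card_nsmul_le_sum (com N x y) _ _ hsub
    rw [nsmul_eq_mul] at hge
    have hcard := card_com hN hy
    calc ξ x * ξ y * f x = 2 / (N : ℝ) * ((N : ℝ) / 2 * (ξ x * ξ y * f x)) := by
          field_simp
    _ ≤ 2 / (N : ℝ) * (((com N x y).card : ℝ) * (ξ x * ξ y * f x)) := by
          apply mul_le_mul_of_nonneg_left (mul_le_mul_of_nonneg_right hcard h0)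
          positivity
    _ ≤ 2 / (N : ℝ) * ∑ z ∈ com N x y, ξ x * ξ y * (f z + D z) := by
          apply mul_le_mul_of_nonneg_left hge
          positivity
  -- the triple-sum rearrangement inequality
  have hswap : ∑ x ∈ B, ∑ y ∈ nbr N x, ∑ z ∈ com N x y, ξ x * ξ y * (f z + D z)
      ≤ ∑ z ∈ B, ∑ x ∈ nbr N z, ∑ y ∈ nbr N z, ξ x * ξ y * (f z + D z) := by
    have ext1 : ∀ (s : Finset ℤ), s ⊆ E → ∀ (h : ℤ → ℝ),
        ∑ i ∈ s, h i = ∑ i ∈ E, if i ∈ s then h i else 0 := by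
      intro s hs h
      rw [Finset.sum_ite_mem, Finset.inter_eq_right.mpr hs]
    have hL : ∑ x ∈ B, ∑ y ∈ nbr N x, ∑ z ∈ com N x y, ξ x * ξ y * (f z + D z)
        = ∑ x ∈ E, ∑ y ∈ E, ∑ z ∈ E,
            (if x ∈ B then if y ∈ nbr N x then if z ∈ com N x y then
              ξ x * ξ y * (f z + D z) else 0 else 0 else 0) := by
      rw [ext1 B hBE]
      refine Finset.sum_congr rfl fun x _ => ?_
      by_cases hxB : x ∈ B
      · simp only [hxB, if_true]
        rw [ext1 (nbr N x) (hnbrE x hxB)]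
        refine Finset.sum_congr rfl fun y _ => ?_
        by_cases hyn : y ∈ nbr N x
        · simp only [hyn, if_true]
          rw [ext1 (com N x y) (hcomE x hxB y)]
        · simp [hyn]
      · simp [hxB]
    have hR : ∑ z ∈ B, ∑ x ∈ nbr N z, ∑ y ∈ nbr N z, ξ x * ξ y * (f z + D z)
        = ∑ z ∈ E, ∑ x ∈ E, ∑ y ∈ E,
            (if z ∈ B then if x ∈ nbr N z then if y ∈ nbr N z then
              ξ x * ξ y * (f z + D z) else 0 else 0 else 0) := by
      rw [ext1 B hBE]
      refine Finset.sum_congr rfl fun z _ => ?_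
      by_cases hzB : z ∈ B
      · simp only [hzB, if_true]
        rw [ext1 (nbr N z) (hnbrE z hzB)]
        refine Finset.sum_congr rfl fun x _ => ?_
        by_cases hxn : x ∈ nbr N z
        · simp only [hxn, if_true]
          rw [ext1 (nbr N z) (hnbrE z hzB)]
        · simp [hxn]
      · simp [hzB]
    rw [hL, hR]
    have hcomm : ∑ z ∈ E, ∑ x ∈ E, ∑ y ∈ E,
            (if z ∈ B then if x ∈ nbr N z then if y ∈ nbr N z then
              ξ x * ξ y * (f z + D z) else 0 else 0 else 0)
        = ∑ x ∈ E, ∑ y ∈ E, ∑ z ∈ E,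
            (if z ∈ B then if x ∈ nbr N z then if y ∈ nbr N z then
              ξ x * ξ y * (f z + D z) else 0 else 0 else 0) := by
      rw [Finset.sum_comm]
      exact Finset.sum_congr rfl fun x _ => Finset.sum_comm
    rw [hcomm]
    refine Finset.sum_le_sum fun x _ => Finset.sum_le_sum fun y _ =>
      Finset.sum_le_sum fun z _ => ?_
    -- pointwise comparison of indicator terms
    have hg0 : 0 ≤ ξ x * ξ y * (f z + D z) :=
      mul_nonneg (mul_nonneg (hξ0 x) (hξ0 y)) (add_nonneg (hf0 z) (hD0 z))
    have hRnn : (0 : ℝ) ≤ (if z ∈ B then if x ∈ nbr N z then if y ∈ nbr N z then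
        ξ x * ξ y * (f z + D z) else 0 else 0 else 0) := by
      split_ifs <;> first | exact hg0 | exact le_rfl
    by_cases hxB : x ∈ B
    · by_cases hyn : y ∈ nbr N x
      · by_cases hzc : z ∈ com N x y
        · simp only [hxB, hyn, hzc, if_true]
          by_cases hx0 : ξ x = 0
          · rw [hx0]; simpa using hRnn
          by_cases hy0 : ξ y = 0
          · rw [hy0]; simpa using hRnn
          have hzx := (com_mem hzc).1
          have hzy := (com_mem hzc).2
          have hzB : z ∈ B := by
            apply hBmem x z hx0
            exact nbr_subset_Icc hzx
          have hxz : x ∈ nbr N z := nbr_symm hzx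
          have hyz : y ∈ nbr N z := nbr_symm hzy
          simp [hzB, hxz, hyz]
        · simp only [hxB, hyn, hzc, if_true, if_false]
          exact hRnn
      · simp only [hxB, hyn, if_true, if_false]
        exact hRnn
    · simp only [hxB, if_false]
      exact hRnn
  -- assemble everything
  calc ∑ x ∈ B, ξ x * u x * f x
      = ∑ x ∈ B, ∑ y ∈ nbr N x, (2 * (N : ℝ))⁻¹ * (ξ x * ξ y * f x) := by
        refine Finset.sum_congr rfl fun x _ => ?_
        rw [hu' x, Finset.mul_sum, Finset.mul_sum, Finset.sum_mul]
        exact Finset.sum_congr rfl fun y _ => by ring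
    _ ≤ ∑ x ∈ B, ∑ y ∈ nbr N x, (2 * (N : ℝ))⁻¹ *
          (2 / (N : ℝ) * ∑ z ∈ com N x y, ξ x * ξ y * (f z + D z)) := by
        refine Finset.sum_le_sum fun x _ => Finset.sum_le_sum fun y hy => ?_
        exact mul_le_mul_of_nonneg_left (key1 x y hy) (by positivity)
    _ = (2 * (N : ℝ))⁻¹ * (2 / (N : ℝ)) *
          ∑ x ∈ B, ∑ y ∈ nbr N x, ∑ z ∈ com N x y, ξ x * ξ y * (f z + D z) := by
        rw [Finset.mul_sum]
        refine Finset.sum_congr rfl fun x _ => ?_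
        rw [Finset.mul_sum]
        exact Finset.sum_congr rfl fun y _ => by ring
    _ ≤ (2 * (N : ℝ))⁻¹ * (2 / (N : ℝ)) *
          ∑ z ∈ B, ∑ x ∈ nbr N z, ∑ y ∈ nbr N z, ξ x * ξ y * (f z + D z) := by
        apply mul_le_mul_of_nonneg_left hswap (by positivity)
    _ = ∑ z ∈ B, (4 * (u z ^ 2 * f z) + 4 * (u z ^ 2 * D z)) := by
        rw [Finset.mul_sum]
        refine Finset.sum_congr rfl fun z _ => ?_
        have hinner : ∑ x ∈ nbr N z, ∑ y ∈ nbr N z, ξ x * ξ y * (f z + D z)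
            = (∑ x ∈ nbr N z, ξ x) * (∑ y ∈ nbr N z, ξ y) * (f z + D z) := by
          rw [Finset.sum_mul_sum, Finset.sum_mul]
          refine Finset.sum_congr rfl fun x _ => ?_
          rw [Finset.sum_mul]
        rw [hinner, hsum2Nu z]
        have hNne : (N : ℝ) ≠ 0 := ne_of_gt hNR
        field_simp
        ring
    _ = 4 * ∑ z ∈ B, u z ^ 2 * f z + 4 * ∑ z ∈ B, u z ^ 2 * D z := by
        rw [Finset.sum_add_distrib, Finset.mul_sum, Finset.mul_sum]
end
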